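/- Let L > 0, let m ≥ 2 be an integer, and let γ_m : [0,L] → ℝ³ be the m-fold covered circle γ_m(s) = (L/(2πm))·(cos(2πms/L), sin(2πms/L), 0). Assume every local minimizer of the bending energy B, among curves in W^{2,2}_arc(0,L;ℝ³) with the same clamped boundary data as γ_m, is of class C²([0,L];ℝ³). Then γ_m is not a local minimizer of B among curves ξ ∈ W^{2,2}_arc(0,L;ℝ³) satisfying ξ(0) = γ_m(0), ξ(L) = γ_m(L), ξ'(0) = γ_m'(0), ξ'(L) = γ_m'(L); in particular, a more than once covered circular elastica is unstable among closed curves of fixed length in ℝ³. -/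

import Mathlib

open MeasureTheory Set Filter RealInnerProductSpace

noncomputable section

/-- Euclidean 3-space. -/
abbrev R3 := EuclideanSpace ℝ (Fin 3)

/-- The point of `ℝ³` with coordinates `(a, b, c)`. -/
def e3 (a b c : ℝ) : R3 := (WithLp.equiv 2 (Fin 3 → ℝ)).symm ![a, b, c]

/-- `γ` (restricted to `[0,L]`) is an arclength parameterized `W^{2,2}` space curve:
`γ` is `C¹` and unit-speed on `[0,L]`, `γ'` is absolutely continuous (it is recovered from
its a.e. derivative by integration), and the second derivative lies in `L²(0,L)`. -/
structure ArcCurve3 (L : ℝ) (γ : ℝ → R3) : Prop where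
  c1 : ContDiffOn ℝ 1 γ (Icc 0 L)
  unit : ∀ s ∈ Icc (0:ℝ) L, ‖deriv γ s‖ = 1
  ac : ∀ a ∈ Icc (0:ℝ) L, ∀ b ∈ Icc (0:ℝ) L,
    deriv γ b - deriv γ a = ∫ s in a..b, deriv (deriv γ) s
  l2 : MemLp (fun s => deriv (deriv γ) s) 2 (volume.restrict (Icc 0 L))

/-- The bending energy `B(γ) = ∫₀^L |γ''|² ds`. -/
def Ben (L : ℝ) (γ : ℝ → R3) : ℝ := ∫ s in Icc (0:ℝ) L, ‖deriv (deriv γ) s‖ ^ 2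

/-- The `W^{2,2}`-distance between two curves on `[0,L]`. -/
def W22Dist (L : ℝ) (γ ξ : ℝ → R3) : ℝ :=
  Real.sqrt (∫ s in Icc (0:ℝ) L, (‖γ s - ξ s‖ ^ 2 + ‖deriv γ s - deriv ξ s‖ ^ 2 +
    ‖deriv (deriv γ) s - deriv (deriv ξ) s‖ ^ 2))

/-- The admissible class `A_c` with clamped boundary conditions in `ℝ³`. -/
def Adm3 (L : ℝ) (P0 P1 V0 V1 : R3) (γ : ℝ → R3) : Prop :=
  ArcCurve3 L γ ∧ γ 0 = P0 ∧ γ L = P1 ∧ deriv γ 0 = V0 ∧ deriv γ L = V1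

/-- Global minimizer of the bending energy in `A_c`. -/
def IsGlobalMin3 (L : ℝ) (P0 P1 V0 V1 : R3) (γ : ℝ → R3) : Prop :=
  Adm3 L P0 P1 V0 V1 γ ∧ ∀ ξ, Adm3 L P0 P1 V0 V1 ξ → Ben L γ ≤ Ben L ξ

/-- Local minimizer of the bending energy in `A_c` (w.r.t. the `W^{2,2}` topology). -/
def IsLocalMin3 (L : ℝ) (P0 P1 V0 V1 : R3) (γ : ℝ → R3) : Prop :=
  Adm3 L P0 P1 V0 V1 γ ∧
    ∃ δ > 0, ∀ ξ, Adm3 L P0 P1 V0 V1 ξ → W22Dist L γ ξ < δ → Ben L γ ≤ Ben L ξ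

/-!
Rotate the first of the `m` loops of `γ_m` about its tangent line at `γ_m(0)` by a small
angle `θ`. The result is again admissible, has the same constant curvature and hence the same
bending energy, and is `O(√(1 - cos θ))`-close to `γ_m` in `W^{2,2}`. If `γ_m` were a local
minimizer, the rotated curve would be one too, hence `C²` by hypothesis; but its acceleration
jumps at the end of the first loop.
-/

section Glue

variable {E : Type*} {f g f' g' : ℝ → E} {l s : ℝ}

def glue (l : ℝ) (f g : ℝ → E) (s : ℝ) : E := if s ≤ l then f s else g s

theorem glue_of_le (h : s ≤ l) : glue l f g s = f s := if_pos h

theorem glue_of_lt (h : l < s) : glue l f g s = g s := if_neg h.not_ge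

theorem continuous_glue [TopologicalSpace E] (hf : Continuous f) (hg : Continuous g)
    (hfg : f l = g l) : Continuous (glue l f g) :=
  hf.if_le hg continuous_id continuous_const fun _ hx => hx ▸ hfg

theorem measurable_glue [TopologicalSpace E] [MeasurableSpace E] [BorelSpace E]
    (hf : Continuous f) (hg : Continuous g) : Measurable (glue l f g) :=
  hf.measurable.ite measurableSet_Iic hg.measurable

section
variable [NormedAddCommGroup E] [NormedSpace ℝ E]

theorem HasDerivAt.glue_Iic {a : E} (hf : HasDerivAt f a l) :
    HasDerivWithinAt (glue l f g) a (Iic l) l :=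
  hf.hasDerivWithinAt.congr (fun _ hx => glue_of_le hx) (glue_of_le le_rfl)

theorem HasDerivAt.glue_Ici {a : E} (hg : HasDerivAt g a l) (hfg : f l = g l) :
    HasDerivWithinAt (glue l f g) a (Ici l) l := by
  refine hg.hasDerivWithinAt.congr (fun x hx => ?_) (by rw [glue_of_le le_rfl, hfg])
  rcases (mem_Ici.1 hx).eq_or_lt with rfl | h
  · rw [glue_of_le le_rfl, hfg]
  · exact glue_of_lt h

theorem hasDerivAt_glue_of_ne (hf : ∀ s, HasDerivAt f (f' s) s)
    (hg : ∀ s, HasDerivAt g (g' s) s) (hs : s ≠ l) :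
    HasDerivAt (glue l f g) (glue l f' g' s) s := by
  rcases hs.lt_or_gt with h | h
  · rw [glue_of_le h.le]
    exact (hf s).congr_of_eventuallyEq <|
      eventually_of_mem (Iio_mem_nhds h) fun _ hx => glue_of_le (le_of_lt hx)
  · rw [glue_of_lt h]
    exact (hg s).congr_of_eventuallyEq <|
      eventually_of_mem (Ioi_mem_nhds h) fun _ hx => glue_of_lt hx

theorem hasDerivAt_glue (hf : ∀ s, HasDerivAt f (f' s) s) (hg : ∀ s, HasDerivAt g (g' s) s)
    (hfg : f l = g l) (hfg' : f' l = g' l) (s : ℝ) :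
    HasDerivAt (glue l f g) (glue l f' g' s) s := by
  rcases eq_or_ne s l with rfl | hs
  · have h := (hf s).glue_Iic.union ((hfg' ▸ hg s).glue_Ici hfg)
    rwa [Iic_union_Ici, hasDerivWithinAt_univ, ← glue_of_le (f := f') (g := g') le_rfl] at h
  · exact hasDerivAt_glue_of_ne hf hg hs

end

end Glue

theorem eq_of_hasDerivWithinAt_Iic_Ici_of_contDiffAt_two {E : Type*} [NormedAddCommGroup E]
    [NormedSpace ℝ E] {f V : ℝ → E} {l : ℝ} {a b : E} (hf : ContDiffAt ℝ 2 f l)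
    (hfV : ∀ s, HasDerivAt f (V s) s) (ha : HasDerivWithinAt V a (Iic l) l)
    (hb : HasDerivWithinAt V b (Ici l) l) : a = b := by
  have hV : deriv f = V := funext fun s => (hfV s).deriv
  have hd : DifferentiableAt ℝ V l :=
    hV ▸ (hf.derivWithin (m := 1) (by norm_num)).differentiableAt (by norm_num)
  rw [← ha.derivWithin (uniqueDiffWithinAt_Iic l), ← hb.derivWithin (uniqueDiffWithinAt_Ici l),
    hd.hasDerivAt.hasDerivWithinAt.derivWithin (uniqueDiffWithinAt_Iic l),
    hd.hasDerivAt.hasDerivWithinAt.derivWithin (uniqueDiffWithinAt_Ici l)]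

theorem ae_deriv_eq_of_hasDerivAt_off_countable {E : Type*} [NormedAddCommGroup E]
    [NormedSpace ℝ E] {V A : ℝ → E} {S : Set ℝ} (hS : S.Countable)
    (hVA : ∀ s ∉ S, HasDerivAt V (A s) s) : ∀ᵐ s, deriv V s = A s := by
  filter_upwards [measure_eq_zero_iff_ae_notMem.1 (hS.measure_zero volume)] with s hs
  exact (hVA s hs).deriv

theorem ArcCurve3.of_hasDerivAt {L C : ℝ} {γ V A : ℝ → R3} {S : Set ℝ} (hS : S.Countable)
    (hγV : ∀ s, HasDerivAt γ (V s) s) (hV : Continuous V) (hVunit : ∀ s, ‖V s‖ = 1)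
    (hVA : ∀ s ∉ S, HasDerivAt V (A s) s) (hA : Measurable A) (hAC : ∀ s, ‖A s‖ ≤ C) :
    ArcCurve3 L γ := by
  have hderiv : deriv γ = V := funext fun s => (hγV s).deriv
  have hae : deriv V =ᵐ[volume] A := ae_deriv_eq_of_hasDerivAt_off_countable hS hVA
  have hAint (a b : ℝ) : IntervalIntegrable A volume a b :=
    intervalIntegrable_const.mono_fun' hA.aestronglyMeasurable.restrict (ae_of_all _ hAC)
  refine ⟨?_, fun s _ => hderiv ▸ hVunit s, fun a _ b _ => ?_, ?_⟩
  · exact (contDiff_one_iff_deriv.2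
      ⟨fun s => (hγV s).differentiableAt, hderiv ▸ hV⟩).contDiffOn
  · rw [hderiv, integral_eq_of_hasDerivAt_off_countable V (deriv V) hS hV.continuousOn
      (fun s hs => (hVA s hs.2).differentiableAt.hasDerivAt) ((hAint a b).congr_ae ?_)]
    exact (ae_restrict_of_ae hae).mono fun _ h => h.symm
  · rw [hderiv]
    exact (MemLp.of_bound hA.aestronglyMeasurable.restrict C (ae_of_all _ hAC)).ae_eq
      (ae_restrict_of_ae hae.symm)

theorem Ben_eq_of_ae_norm_eq {L κ : ℝ} {γ : ℝ → R3} (hL : 0 ≤ L)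
    (hκ : ∀ᵐ s, ‖deriv (deriv γ) s‖ = κ) : Ben L γ = κ ^ 2 * L := by
  rw [Ben, integral_congr_ae (ae_restrict_of_ae (hκ.mono fun s h => by rw [h])),
    setIntegral_const, Real.volume_real_Icc_of_le hL, sub_zero, smul_eq_mul, mul_comm]

def w22Integrand (γ ξ : ℝ → R3) (s : ℝ) : ℝ :=
  ‖γ s - ξ s‖ ^ 2 + ‖deriv γ s - deriv ξ s‖ ^ 2 +
    ‖deriv (deriv γ) s - deriv (deriv ξ) s‖ ^ 2

theorem w22Integrand_nonneg (γ ξ : ℝ → R3) (s : ℝ) : 0 ≤ w22Integrand γ ξ s := by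
  unfold w22Integrand; positivity

theorem norm_sub_sq_le_two_mul {E : Type*} [SeminormedAddCommGroup E] (x y z : E) :
    ‖x - z‖ ^ 2 ≤ 2 * ‖x - y‖ ^ 2 + 2 * ‖y - z‖ ^ 2 :=
  calc ‖x - z‖ ^ 2 ≤ (‖x - y‖ + ‖y - z‖) ^ 2 := by
        gcongr; exact norm_sub_le_norm_sub_add_norm_sub x y z
    _ ≤ 2 * ‖x - y‖ ^ 2 + 2 * ‖y - z‖ ^ 2 := by
        linarith [add_sq_le (a := ‖x - y‖) (b := ‖y - z‖)]

theorem w22Integrand_le (γ ξ η : ℝ → R3) (s : ℝ) :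
    w22Integrand γ η s ≤ 2 * w22Integrand γ ξ s + 2 * w22Integrand ξ η s := by
  unfold w22Integrand
  linarith [norm_sub_sq_le_two_mul (γ s) (ξ s) (η s),
    norm_sub_sq_le_two_mul (deriv γ s) (deriv ξ s) (deriv η s),
    norm_sub_sq_le_two_mul (deriv (deriv γ) s) (deriv (deriv ξ) s) (deriv (deriv η) s)]

theorem W22Dist_sq (L : ℝ) (γ ξ : ℝ → R3) :
    W22Dist L γ ξ ^ 2 = ∫ s in Icc 0 L, w22Integrand γ ξ s :=
  Real.sq_sqrt (setIntegral_nonneg measurableSet_Icc fun s _ => w22Integrand_nonneg γ ξ s)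

theorem ArcCurve3.integrableOn_w22Integrand {L : ℝ} {γ ξ : ℝ → R3} (hγ : ArcCurve3 L γ)
    (hξ : ArcCurve3 L ξ) : IntegrableOn (w22Integrand γ ξ) (Icc 0 L) := by
  have h1 : MemLp (deriv γ - deriv ξ) 2 (volume.restrict (Icc 0 L)) := by
    refine MemLp.of_bound ((stronglyMeasurable_deriv γ).sub
      (stronglyMeasurable_deriv ξ)).aestronglyMeasurable 2 ?_
    filter_upwards [ae_restrict_mem measurableSet_Icc] with s hs
    calc ‖deriv γ s - deriv ξ s‖ ≤ ‖deriv γ s‖ + ‖deriv ξ s‖ := norm_sub_le _ _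
      _ = 2 := by rw [hγ.unit s hs, hξ.unit s hs]; norm_num
  have h2 : MemLp (fun s => deriv (deriv γ) s - deriv (deriv ξ) s) 2
      (volume.restrict (Icc 0 L)) := hγ.l2.sub hξ.l2
  exact ((((hγ.c1.continuousOn.sub hξ.c1.continuousOn).norm.pow 2).integrableOn_Icc).add
    (h1.integrable_norm_pow' (p := 2))).add (h2.integrable_norm_pow' (p := 2))

theorem ArcCurve3.W22Dist_sq_le {L : ℝ} {γ ξ η : ℝ → R3} (hγ : ArcCurve3 L γ)
    (hξ : ArcCurve3 L ξ) (hη : ArcCurve3 L η) :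
    W22Dist L γ η ^ 2 ≤ 2 * W22Dist L γ ξ ^ 2 + 2 * W22Dist L ξ η ^ 2 := by
  simp only [W22Dist_sq, ← integral_const_mul]
  rw [← integral_add ((hγ.integrableOn_w22Integrand hξ).const_mul 2)
    ((hξ.integrableOn_w22Integrand hη).const_mul 2)]
  exact setIntegral_mono_on (hγ.integrableOn_w22Integrand hη)
    (((hγ.integrableOn_w22Integrand hξ).const_mul 2).add
      ((hξ.integrableOn_w22Integrand hη).const_mul 2))
    measurableSet_Icc fun s _ => w22Integrand_le γ ξ η s

theorem W22Dist_le_of_ae_le {L C : ℝ} {γ ξ : ℝ → R3} (hL : 0 ≤ L)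
    (h : ∀ᵐ s, s ∈ Icc 0 L → w22Integrand γ ξ s ≤ C) :
    W22Dist L γ ξ ≤ √(C * L) := by
  refine Real.sqrt_le_sqrt ((le_abs_self _).trans ?_)
  have := norm_setIntegral_le_of_norm_le_const_ae' measure_Icc_lt_top
    (h.mono fun s hs hmem => (Real.norm_of_nonneg (w22Integrand_nonneg γ ξ s)).trans_le (hs hmem))
  rwa [Real.volume_real_Icc_of_le hL, sub_zero] at this

theorem IsLocalMin3.exists_forall_isLocalMin3 {L : ℝ} {P0 P1 V0 V1 : R3} {γ : ℝ → R3}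
    (h : IsLocalMin3 L P0 P1 V0 V1 γ) :
    ∃ ε > 0, ∀ ξ, Adm3 L P0 P1 V0 V1 ξ → W22Dist L γ ξ < ε → Ben L ξ ≤ Ben L γ →
      IsLocalMin3 L P0 P1 V0 V1 ξ := by
  obtain ⟨hγ, δ, hδ, hmin⟩ := h
  refine ⟨δ / 2, by positivity, fun ξ hξ hγξ hBen =>
    ⟨hξ, δ / 2, by positivity, fun η hη hξη => ?_⟩⟩
  have hγη : W22Dist L γ η ^ 2 < δ ^ 2 := by
    have := hγ.1.W22Dist_sq_le hξ.1 hη.1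
    have h1 : W22Dist L γ ξ ^ 2 < (δ / 2) ^ 2 := by gcongr; exact Real.sqrt_nonneg _
    have h2 : W22Dist L ξ η ^ 2 < (δ / 2) ^ 2 := by gcongr; exact Real.sqrt_nonneg _
    nlinarith
  exact hBen.trans (hmin η hη (lt_of_pow_lt_pow_left₀ 2 hδ.le hγη))

theorem e3_sub (a b c a' b' c' : ℝ) : e3 a b c - e3 a' b' c' = e3 (a - a') (b - b') (c - c') := by
  ext i; fin_cases i <;> simp [e3]

theorem e3_smul (r a b c : ℝ) : r • e3 a b c = e3 (r * a) (r * b) (r * c) := by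
  ext i; fin_cases i <;> simp [e3]

theorem norm_e3_sq (a b c : ℝ) : ‖e3 a b c‖ ^ 2 = a ^ 2 + b ^ 2 + c ^ 2 := by
  rw [EuclideanSpace.norm_eq, Real.sq_sqrt (by positivity)]
  simp [e3, Fin.sum_univ_three]

theorem e3_apply_two (a b c : ℝ) : e3 a b c 2 = c := rfl

theorem HasDerivAt.e3 {a b c : ℝ → ℝ} {a' b' c' s : ℝ} (ha : HasDerivAt a a' s)
    (hb : HasDerivAt b b' s) (hc : HasDerivAt c c' s) :
    HasDerivAt (fun t => e3 (a t) (b t) (c t)) (e3 a' b' c') s := by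
  have h : HasDerivAt (fun t => (![a t, b t, c t] : Fin 3 → ℝ)) ![a', b', c'] s := by
    rw [hasDerivAt_pi]; intro i; fin_cases i <;> simpa
  exact (PiLp.continuousLinearEquiv 2 ℝ _).symm.hasFDerivAt.comp_hasDerivAt s h

theorem Continuous.e3 {a b c : ℝ → ℝ} (ha : Continuous a) (hb : Continuous b)
    (hc : Continuous c) : Continuous fun t => e3 (a t) (b t) (c t) :=
  (PiLp.continuousLinearEquiv 2 ℝ _).symm.continuous.comp <|
    continuous_pi fun i => by fin_cases i <;> simpa

namespace TiltedCircle

open Real Topology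

variable (ω θ : ℝ)

/-- The circle of radius `ω⁻¹` through `ω⁻¹ e₁` with tangent `e₂` there, rotated by the
angle `θ` about this tangent line; `θ = 0` is the planar circle. -/
def curve (s : ℝ) : R3 :=
  e3 (ω⁻¹ * (1 + cos θ * (cos (ω * s) - 1))) (ω⁻¹ * sin (ω * s))
    (ω⁻¹ * (sin θ * (1 - cos (ω * s))))

def velocity (s : ℝ) : R3 := e3 (-(cos θ * sin (ω * s))) (cos (ω * s)) (sin θ * sin (ω * s))

def acceleration (s : ℝ) : R3 :=
  e3 (-(ω * (cos θ * cos (ω * s)))) (-(ω * sin (ω * s))) (ω * (sin θ * cos (ω * s)))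

theorem curve_zero (s : ℝ) : curve ω 0 s = ω⁻¹ • e3 (cos (ω * s)) (sin (ω * s)) 0 := by
  simp [curve, e3_smul]

theorem hasDerivAt_cos_mul (s : ℝ) :
    HasDerivAt (fun t => cos (ω * t)) (-(ω * sin (ω * s))) s := by
  simpa [mul_comm] using ((hasDerivAt_id s).const_mul ω).cos

theorem hasDerivAt_sin_mul (s : ℝ) :
    HasDerivAt (fun t => sin (ω * t)) (ω * cos (ω * s)) s := by
  simpa [mul_comm] using ((hasDerivAt_id s).const_mul ω).sin

variable {ω}

theorem hasDerivAt_curve (hω : ω ≠ 0) (s : ℝ) :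
    HasDerivAt (curve ω θ) (velocity ω θ s) s := by
  have hc := hasDerivAt_cos_mul ω s
  refine HasDerivAt.e3 ?_ ?_ ?_
  · exact (((hc.sub_const 1).const_mul (cos θ)).const_add 1 |>.const_mul ω⁻¹).congr_deriv
      (by field_simp)
  · exact ((hasDerivAt_sin_mul ω s).const_mul ω⁻¹).congr_deriv (by field_simp)
  · exact ((hc.const_sub 1).const_mul (sin θ) |>.const_mul ω⁻¹).congr_deriv (by field_simp)

theorem hasDerivAt_velocity (s : ℝ) : HasDerivAt (velocity ω θ) (acceleration ω θ s) s := by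
  have hs := hasDerivAt_sin_mul ω s
  refine HasDerivAt.e3 ?_ (hasDerivAt_cos_mul ω s) ?_
  · exact (hs.const_mul (cos θ)).neg.congr_deriv (by ring)
  · exact (hs.const_mul (sin θ)).congr_deriv (by ring)

theorem deriv_curve (hω : ω ≠ 0) : deriv (curve ω θ) = velocity ω θ :=
  funext fun s => (hasDerivAt_curve θ hω s).deriv

theorem deriv_velocity : deriv (velocity ω θ) = acceleration ω θ :=
  funext fun s => (hasDerivAt_velocity θ s).deriv

theorem continuous_velocity : Continuous (velocity ω θ) := by
  unfold velocity; apply Continuous.e3 <;> fun_prop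

theorem continuous_acceleration : Continuous (acceleration ω θ) := by
  unfold acceleration; apply Continuous.e3 <;> fun_prop

theorem norm_velocity (s : ℝ) : ‖velocity ω θ s‖ = 1 := by
  rw [← sq_eq_sq₀ (norm_nonneg _) zero_le_one, one_pow, velocity, norm_e3_sq]
  linear_combination sin (ω * s) ^ 2 * cos_sq_add_sin_sq θ + sin_sq_add_cos_sq (ω * s)

theorem norm_acceleration (s : ℝ) : ‖acceleration ω θ s‖ = |ω| := by
  rw [← sq_eq_sq₀ (norm_nonneg _) (abs_nonneg ω), sq_abs, acceleration, norm_e3_sq]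
  linear_combination ω ^ 2 * cos (ω * s) ^ 2 * cos_sq_add_sin_sq θ +
    ω ^ 2 * sin_sq_add_cos_sq (ω * s)

section FullTurn

variable {s : ℝ} (hs : cos (ω * s) = 1)
include hs

theorem sin_eq_zero_of_cos_eq_one : sin (ω * s) = 0 := by
  nlinarith [sin_sq_add_cos_sq (ω * s)]

theorem curve_eq_of_cos_eq_one (θ' : ℝ) : curve ω θ s = curve ω θ' s := by
  simp [curve, hs, sin_eq_zero_of_cos_eq_one hs]

theorem velocity_eq_of_cos_eq_one (θ' : ℝ) : velocity ω θ s = velocity ω θ' s := by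
  simp [velocity, hs, sin_eq_zero_of_cos_eq_one hs]

theorem acceleration_apply_two_of_cos_eq_one : acceleration ω θ s 2 = ω * sin θ := by
  simp [acceleration, e3_apply_two, hs]

end FullTurn

theorem w22Integrand_curve_le (hω : ω ≠ 0) (s : ℝ) :
    w22Integrand (curve ω 0) (curve ω θ) s ≤ 2 * (1 - cos θ) * (4 / ω ^ 2 + 1 + ω ^ 2) := by
  set C := cos (ω * s)
  set S := sin (ω * s)
  have key : (1 - cos θ) ^ 2 + sin θ ^ 2 = 2 * (1 - cos θ) := by
    linear_combination sin_sq_add_cos_sq θ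
  have h0 : ‖curve ω 0 s - curve ω θ s‖ ^ 2 = 2 * (1 - cos θ) * ((1 - C) ^ 2 / ω ^ 2) := by
    simp only [curve, e3_sub, norm_e3_sq, cos_zero, sin_zero]
    field_simp
    linear_combination (1 - C) ^ 2 * key
  have h1 : ‖velocity ω 0 s - velocity ω θ s‖ ^ 2 = 2 * (1 - cos θ) * S ^ 2 := by
    simp only [velocity, e3_sub, norm_e3_sq, cos_zero, sin_zero]
    linear_combination S ^ 2 * key
  have h2 : ‖acceleration ω 0 s - acceleration ω θ s‖ ^ 2 =
      2 * (1 - cos θ) * (ω ^ 2 * C ^ 2) := by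
    simp only [acceleration, e3_sub, norm_e3_sq, cos_zero, sin_zero]
    linear_combination (ω * C) ^ 2 * key
  have hC : (1 - C) ^ 2 / ω ^ 2 ≤ 4 / ω ^ 2 := by
    gcongr; nlinarith [neg_one_le_cos (ω * s), cos_le_one (ω * s)]
  have hS : S ^ 2 ≤ 1 := sin_sq_le_one (ω * s)
  have hC' : ω ^ 2 * C ^ 2 ≤ ω ^ 2 := mul_le_of_le_one_right (sq_nonneg ω) (cos_sq_le_one _)
  rw [w22Integrand, deriv_curve _ hω, deriv_curve _ hω, deriv_velocity, deriv_velocity,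
    h0, h1, h2, ← mul_add, ← mul_add]
  exact mul_le_mul_of_nonneg_left (by linarith) (by linarith [cos_le_one θ])

section FirstLoop

variable {l : ℝ}

def tiltFirstLoop (ω l θ : ℝ) : ℝ → R3 := glue l (curve ω θ) (curve ω 0)

variable (hω : ω ≠ 0) (hl : cos (ω * l) = 1)
include hω hl

theorem hasDerivAt_tiltFirstLoop (s : ℝ) :
    HasDerivAt (tiltFirstLoop ω l θ) (glue l (velocity ω θ) (velocity ω 0) s) s :=
  hasDerivAt_glue (hasDerivAt_curve θ hω) (hasDerivAt_curve 0 hω)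
    (curve_eq_of_cos_eq_one θ hl 0) (velocity_eq_of_cos_eq_one θ hl 0) s

theorem deriv_tiltFirstLoop :
    deriv (tiltFirstLoop ω l θ) = glue l (velocity ω θ) (velocity ω 0) :=
  funext fun s => (hasDerivAt_tiltFirstLoop θ hω hl s).deriv

theorem arcCurve3_tiltFirstLoop (L : ℝ) : ArcCurve3 L (tiltFirstLoop ω l θ) := by
  refine ArcCurve3.of_hasDerivAt (countable_singleton l) (hasDerivAt_tiltFirstLoop θ hω hl)
    (continuous_glue (continuous_velocity θ) (continuous_velocity 0)
      (velocity_eq_of_cos_eq_one θ hl 0)) (fun s => ?_)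
    (fun _ hs => hasDerivAt_glue_of_ne (hasDerivAt_velocity θ) (hasDerivAt_velocity 0) hs)
    (measurable_glue (continuous_acceleration θ) (continuous_acceleration 0))
    (C := |ω|) (fun s => ?_)
  · unfold glue; split_ifs <;> exact norm_velocity _ s
  · unfold glue; split_ifs <;> exact (norm_acceleration _ s).le

theorem ae_deriv_deriv_tiltFirstLoop :
    ∀ᵐ s, deriv (deriv (tiltFirstLoop ω l θ)) s =
      glue l (acceleration ω θ) (acceleration ω 0) s := by
  rw [deriv_tiltFirstLoop θ hω hl]
  exact ae_deriv_eq_of_hasDerivAt_off_countable (countable_singleton l) fun _ hs =>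
    hasDerivAt_glue_of_ne (hasDerivAt_velocity θ) (hasDerivAt_velocity 0) hs

theorem Ben_tiltFirstLoop {L : ℝ} (hL : 0 ≤ L) :
    Ben L (tiltFirstLoop ω l θ) = Ben L (curve ω 0) := by
  rw [Ben_eq_of_ae_norm_eq (κ := |ω|) hL, Ben_eq_of_ae_norm_eq (κ := |ω|) hL]
  · exact ae_of_all _ fun s => by rw [deriv_curve 0 hω, deriv_velocity, norm_acceleration]
  · filter_upwards [ae_deriv_deriv_tiltFirstLoop θ hω hl] with s hs
    rw [hs]; unfold glue; split_ifs <;> exact norm_acceleration _ s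

theorem adm3_tiltFirstLoop {L : ℝ} (hl0 : 0 ≤ l) (hlL : l < L) :
    Adm3 L (curve ω 0 0) (curve ω 0 L) (deriv (curve ω 0) 0) (deriv (curve ω 0) L)
      (tiltFirstLoop ω l θ) := by
  have h0 : cos (ω * 0) = 1 := by simp
  refine ⟨arcCurve3_tiltFirstLoop θ hω hl L, ?_, glue_of_lt hlL, ?_, ?_⟩
  · rw [tiltFirstLoop, glue_of_le hl0, curve_eq_of_cos_eq_one θ h0 0]
  · rw [deriv_tiltFirstLoop θ hω hl, deriv_curve 0 hω, glue_of_le hl0,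
      velocity_eq_of_cos_eq_one θ h0 0]
  · rw [deriv_tiltFirstLoop θ hω hl, deriv_curve 0 hω, glue_of_lt hlL]

theorem W22Dist_tiltFirstLoop_le {L : ℝ} (hL : 0 ≤ L) :
    W22Dist L (curve ω 0) (tiltFirstLoop ω l θ) ≤
      √(2 * (1 - cos θ) * (4 / ω ^ 2 + 1 + ω ^ 2) * L) := by
  refine W22Dist_le_of_ae_le hL ?_
  filter_upwards [ae_deriv_deriv_tiltFirstLoop θ hω hl] with s hs _
  rw [w22Integrand, hs, deriv_tiltFirstLoop θ hω hl, tiltFirstLoop]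
  rcases le_or_gt s l with h | h
  · simp only [glue_of_le h, ← deriv_velocity (ω := ω) θ, ← deriv_curve θ hω]
    exact w22Integrand_curve_le θ hω s
  · simp only [glue_of_lt h, deriv_curve 0 hω, deriv_velocity, sub_self, norm_zero]
    have := cos_le_one θ
    norm_num
    positivity

theorem not_contDiffAt_tiltFirstLoop (hθ : sin θ ≠ 0) :
    ¬ ContDiffAt ℝ 2 (tiltFirstLoop ω l θ) l := by
  intro h
  have hv := velocity_eq_of_cos_eq_one θ hl 0
  have := eq_of_hasDerivWithinAt_Iic_Ici_of_contDiffAt_two h (hasDerivAt_tiltFirstLoop θ hω hl)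
    (hasDerivAt_velocity θ l).glue_Iic ((hasDerivAt_velocity 0 l).glue_Ici hv)
  have h2 := congrArg (· 2) this
  simp only [acceleration_apply_two_of_cos_eq_one _ hl, sin_zero, mul_zero] at h2
  exact hθ ((mul_eq_zero.1 h2).resolve_left hω)

theorem exists_sin_ne_zero_W22Dist_tiltFirstLoop_lt {L ε : ℝ} (hL : 0 ≤ L) (hε : 0 < ε) :
    ∃ θ, sin θ ≠ 0 ∧ W22Dist L (curve ω 0) (tiltFirstLoop ω l θ) < ε := by
  set bound := fun θ => √(2 * (1 - cos θ) * (4 / ω ^ 2 + 1 + ω ^ 2) * L)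
  have hlim : Tendsto bound (𝓝[>] 0) (𝓝 0) := by
    have hc : Continuous bound := by fun_prop
    simpa [bound] using (hc.tendsto 0).mono_left nhdsWithin_le_nhds
  obtain ⟨θ, hθε, hθ⟩ :=
    ((hlim.eventually (gt_mem_nhds hε)).and (Ioo_mem_nhdsGT pi_pos)).exists
  exact ⟨θ, (sin_pos_of_mem_Ioo hθ).ne',
    (W22Dist_tiltFirstLoop_le θ hω hl hL).trans_lt hθε⟩

end FirstLoop

end TiltedCircle

open Real TiltedCircle

/-- instability of multiply covered circles in `ℝ³`. -/
theorem instability_multifold_circle_spatial (L : ℝ) (hL : 0 < L) (m : ℕ) (hm : 2 ≤ m)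
    (γm : ℝ → R3)
    (hγm : ∀ s, γm s = (L / (2 * Real.pi * m)) •
      e3 (Real.cos (2 * Real.pi * m * s / L)) (Real.sin (2 * Real.pi * m * s / L)) 0)
    (H : ∀ ξ, IsLocalMin3 L (γm 0) (γm L) (deriv γm 0) (deriv γm L) ξ →
      ContDiffOn ℝ 2 ξ (Icc 0 L)) :
    ¬ IsLocalMin3 L (γm 0) (γm L) (deriv γm 0) (deriv γm L) γm := by
  intro hmin
  have hm1 : (1 : ℝ) < m := by exact_mod_cast hm
  set ω := 2 * π * m / L
  set l := L / m
  have hω : ω ≠ 0 := by positivity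
  have hl : cos (ω * l) = 1 := by
    rw [show ω * l = 2 * π by simp only [ω, l]; field_simp, cos_two_pi]
  have hl0 : 0 < l := by positivity
  have hlL : l < L := div_lt_self hL hm1
  have hγ : γm = curve ω 0 := funext fun s => by
    rw [hγm, curve_zero, inv_div, mul_div_right_comm]
  rw [hγ] at hmin H
  obtain ⟨ε, hε, hnear⟩ := hmin.exists_forall_isLocalMin3
  obtain ⟨θ, hθ, hdist⟩ := exists_sin_ne_zero_W22Dist_tiltFirstLoop_lt hω hl hL.le hε
  have hloc := hnear _ (adm3_tiltFirstLoop θ hω hl hl0.le hlL) hdist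
    (Ben_tiltFirstLoop θ hω hl hL.le).le
  exact not_contDiffAt_tiltFirstLoop θ hω hl hθ ((H _ hloc).contDiffAt (Icc_mem_nhds hl0 hlL))
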